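/- For every nonnegative integer k, every nonnegative real number r, and all positive real numbers ℓ and N, there exists a real number N* ≥ (k+1)N such that the following holds. Let (G,φ) be a (0,ℓ]-bounded weighted graph, let S ⊆ V(G) with |S| ≤ k, let Z ⊆ N_{(G,φ)}^{≤r}[S], let m be a positive integer, let c_Z : Z → {1,…,m}, and let c be an m-coloring of ((G,φ)−Z)^ℓ with weak diameter in ((G,φ)−Z)^ℓ at most N. Then the m-coloring c ∪ c_Z of (G,φ)^ℓ has weak diameter in (G,φ)^ℓ at most N*. -/

import Mathlib

open scoped ENNReal

/-- The length of a walk in an edge-weighted graph: the sum of the weights of its edges. -/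
def walkLen {V : Type} {G : SimpleGraph V} (w : Sym2 V → ℝ) {x y : V} (p : G.Walk x y) : ℝ :=
  (p.edges.map w).sum

/-- The distance between two vertices of an edge-weighted graph: the infimum of the lengths
of paths between them (`⊤` if there is no such path). -/
noncomputable def wDist {V : Type} (G : SimpleGraph V) (w : Sym2 V → ℝ) (x y : V) : ℝ≥0∞ :=
  ⨅ q : {q : G.Walk x y // q.IsPath}, ENNReal.ofReal (walkLen w q.1)

lemma wDist_comm {V : Type} (G : SimpleGraph V) (w : Sym2 V → ℝ) (x y : V) :
    wDist G w x y = wDist G w y x := by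
  have key : ∀ a b : V, wDist G w a b ≤ wDist G w b a := by
    intro a b
    refine le_iInf fun q => ?_
    refine iInf_le_of_le ⟨q.1.reverse, q.2.reverse⟩ ?_
    simp [walkLen, List.sum_reverse]
  exact le_antisymm (key x y) (key y x)

/-- The power graph: two distinct vertices are adjacent iff their weighted distance
is at most `r`. -/
noncomputable def powerGraph {V : Type} (G : SimpleGraph V) (w : Sym2 V → ℝ) (r : ℝ) :
    SimpleGraph V where
  Adj x y := x ≠ y ∧ wDist G w x y ≤ ENNReal.ofReal r
  symm := ⟨by
    rintro x y ⟨hne, hle⟩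
    exact ⟨hne.symm, by rwa [wDist_comm]⟩⟩
  loopless := ⟨fun x h => h.1 rfl⟩

/-- The unit-length (hop) distance in an unweighted graph. -/
noncomputable def hopDist {V : Type} (L : SimpleGraph V) (x y : V) : ℝ≥0∞ :=
  ⨅ q : L.Walk x y, (q.length : ℝ≥0∞)

/-- Same-colour adjacency within a vertex set `A`. -/
def colorGraph {V : Type} (K : SimpleGraph V) (A : Set V) {m : ℕ} (c : V → Fin m) :
    SimpleGraph V where
  Adj x y := K.Adj x y ∧ x ∈ A ∧ y ∈ A ∧ c x = c y
  symm := ⟨by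
    rintro x y ⟨h, hx, hy, hc⟩
    exact ⟨h.symm, hy, hx, hc.symm⟩⟩
  loopless := ⟨fun x h => K.irrefl h.1⟩

/-- The colouring `c` of the subgraph of `K` induced on `A` has weak diameter, measured by the
hop distance of `L`, at most `N`: any two vertices of a monochromatic component of `K ↾ A` are
at hop distance at most `N` in `L`. -/
def HasWeakDiamLE {V : Type} (K : SimpleGraph V) (A : Set V) (L : SimpleGraph V) {m : ℕ}
    (c : V → Fin m) (N : ℝ) : Prop :=
  ∀ x ∈ A, ∀ y ∈ A, (colorGraph K A c).Reachable x y → hopDist L x y ≤ ENNReal.ofReal N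

/-- `nbhd G w r S`: vertices joined to `S` by a path of weighted length at most `r`. -/
def nbhd {V : Type} (G : SimpleGraph V) (w : Sym2 V → ℝ) (r : ℝ) (S : Set V) : Set V :=
  {v | ∃ s ∈ S, ∃ q : G.Walk v s, q.IsPath ∧ walkLen w q ≤ r}

/-- Deleting a set of vertices (keeping them as isolated vertices of the ambient type). -/
def delVerts {V : Type} (G : SimpleGraph V) (Z : Set V) : SimpleGraph V where
  Adj x y := G.Adj x y ∧ x ∉ Z ∧ y ∉ Z
  symm := ⟨by
    rintro x y ⟨h, hx, hy⟩
    exact ⟨h.symm, hy, hx⟩⟩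
  loopless := ⟨fun x h => G.irrefl h.1⟩

/-- A weighted graph: a finite simple graph together with positive edge weights. -/
structure WGraph : Type 1 where
  V : Type
  fin : Finite V
  G : SimpleGraph V
  w : Sym2 V → ℝ
  pos : ∀ e ∈ G.edgeSet, 0 < w e

/-- The extended metric on the vertex set of a weighted graph. -/
noncomputable def WGraph.dist (W : WGraph) : W.V → W.V → ℝ≥0∞ := wDist W.G W.w

/-- All edge weights lie in `(0, ℓ]`. -/
def WGraph.IsBounded (W : WGraph) (ℓ : ℝ) : Prop := ∀ e ∈ W.G.edgeSet, W.w e ≤ ℓ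

/-- `f` is an `n`-dimensional control function for the extended metric `d`. -/
def IsControlOn {X : Type} (d : X → X → ℝ≥0∞) (n : ℕ) (f : ℝ → ℝ) : Prop :=
  ∀ r : ℝ, 0 < r → ∃ U : Fin (n + 1) → Set (Set X),
    (∀ x : X, ∃ i, ∃ s ∈ U i, x ∈ s) ∧
    (∀ i, ∀ s ∈ U i, ∀ t ∈ U i, s ≠ t → ∀ x ∈ s, ∀ y ∈ t, ENNReal.ofReal r < d x y) ∧
    (∀ i, ∀ s ∈ U i, ∀ x ∈ s, ∀ y ∈ s, d x y ≤ ENNReal.ofReal (f r))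

/-- The asymptotic dimension of a class of weighted graphs is at most `n`. -/
def asdimLE (F : Set WGraph) (n : ℕ) : Prop :=
  ∃ f : ℝ → ℝ, (∀ x, 0 < x → 0 < f x) ∧ ∀ W ∈ F, IsControlOn W.dist n f

/-- The Assouad–Nagata dimension of a class of weighted graphs is at most `n`:
some dilation is a common `n`-dimensional control function. -/
def ANdimLE (F : Set WGraph) (n : ℕ) : Prop :=
  ∃ (f : ℝ → ℝ) (c : ℝ), 0 < c ∧ (∀ x, 0 < x → 0 < f x) ∧ (∀ x, 0 < x → f x ≤ c * x) ∧
    ∀ W ∈ F, IsControlOn W.dist n f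

/-- `H` is a minor of `G`: there are pairwise disjoint nonempty connected branch sets in `G`,
one for each vertex of `H`, with branch sets of adjacent vertices joined by an edge. -/
def IsMinorOf {α β : Type} (H : SimpleGraph β) (G : SimpleGraph α) : Prop :=
  ∃ B : β → Set α,
    (∀ h, (B h).Nonempty) ∧
    (∀ h h', h ≠ h' → Disjoint (B h) (B h')) ∧
    (∀ h, (G.induce (B h)).Connected) ∧
    (∀ h h', H.Adj h h' → ∃ a ∈ B h, ∃ b ∈ B h', G.Adj a b)

/-!
Call a vertex near a center `s ∈ S` if it lies within weighted distance `ℓ + r` of `s`; every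
vertex of `Z` is near some center. A path of length at most `ℓ` starting at a vertex that is near
no center avoids `Z`, so along a monochromatic walk every edge leaving such a far vertex is an edge
of the monochromatic graph of `c` in `((G,φ)−Z)^ℓ`: a run of the walk up to its first near vertex
costs at most `N` hops. From there jump, through the center `s` (a vertex near `s` is at most
`2⌈r/ℓ⌉ + 1` hops from `s`), to the last vertex of the walk near `s`. The rest of the walk is near
only the other centers, so induction on the number of centers bounds the weak diameter by
`N + |S| (N + 4⌈r/ℓ⌉ + 3)`.
-/

open SimpleGraph

lemma List.sum_map_le_of_nodup_of_subset {α M : Type*} [AddCommMonoid M] [Preorder M]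
    [IsOrderedAddMonoid M] {l' l : List α} (f : α → M) (hn : l'.Nodup) (hsub : l' ⊆ l)
    (h0 : ∀ a ∈ l, 0 ≤ f a) : (l'.map f).sum ≤ (l.map f).sum := by
  obtain ⟨l'', hperm, hsl⟩ := hn.subperm hsub
  rw [← (hperm.map f).sum_eq]
  exact (hsl.map f).sum_le_sum (by simpa using h0)

lemma SimpleGraph.Walk.exists_suffix_forall_not_mem_tail {V : Type*} {G : SimpleGraph V}
    {u v : V} (p : G.Walk u v) {P : V → Prop} (hp : ∃ z ∈ p.support, P z) :
    ∃ z, P z ∧ ∃ q : G.Walk z v, q.support ⊆ p.support ∧ ∀ z' ∈ q.support.tail, ¬ P z' := by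
  induction p with
  | nil =>
    obtain ⟨z, hz, hPz⟩ := hp
    rw [support_nil, List.mem_singleton] at hz
    subst hz
    exact ⟨_, hPz, nil, List.Subset.refl _, by simp⟩
  | cons h p ih =>
    by_cases hp' : ∃ z ∈ p.support, P z
    · obtain ⟨z, hPz, q, hsub, htail⟩ := ih hp'
      exact ⟨z, hPz, q, List.Subset.trans hsub (by simp), htail⟩
    · push Not at hp'
      obtain ⟨z, hz, hPz⟩ := hp
      rw [support_cons, List.mem_cons] at hz
      rcases hz with rfl | hz
      · exact ⟨_, hPz, cons h p, List.Subset.refl _, by simpa using hp'⟩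
      · exact absurd hPz (hp' z hz)

section HopDist

variable {V : Type} {L : SimpleGraph V} {x y z : V}

lemma hopDist_eq_edist (L : SimpleGraph V) (x y : V) : hopDist L x y = L.edist x y := by
  simp [hopDist, SimpleGraph.edist]

lemma hopDist_self (L : SimpleGraph V) (x : V) : hopDist L x x = 0 := by
  simp [hopDist_eq_edist]

lemma hopDist_comm (L : SimpleGraph V) (x y : V) : hopDist L x y = hopDist L y x := by
  simp [hopDist_eq_edist, SimpleGraph.edist_comm]

lemma hopDist_triangle (L : SimpleGraph V) (x y z : V) :
    hopDist L x z ≤ hopDist L x y + hopDist L y z := by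
  simp only [hopDist_eq_edist]
  exact_mod_cast L.edist_triangle

lemma hopDist_le_one_of_adj (h : L.Adj x y) : hopDist L x y ≤ 1 := by
  rw [hopDist_eq_edist]
  exact_mod_cast L.edist_le_one_iff_adj_or_eq.2 (Or.inl h)

lemma hopDist_anti {L' : SimpleGraph V} (hL : L ≤ L') (x y : V) :
    hopDist L' x y ≤ hopDist L x y := by
  simp only [hopDist_eq_edist]
  exact_mod_cast SimpleGraph.edist_anti hL

end HopDist

section Centers

/- In the application `L = (G,φ)^ℓ`, `H` is the monochromatic graph of `c ∪ c_Z` in `L`, `F` is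
that of `c` in `((G,φ)−Z)^ℓ`, and `near v s` says that `s ∈ S` lies within weighted distance
`ℓ + r` of `v`. -/

variable {V : Type} {L H F : SimpleGraph V} {near : V → V → Prop} {N A : ℝ≥0∞}

lemma hopDist_le_of_far_prefix (hF : ∀ u v, H.Adj u v → (∀ s, ¬ near u s) → F.Adj u v)
    (hFN : ∀ x y, F.Reachable x y → hopDist L x y ≤ N) {M : ℝ≥0∞} {x y : V} (q : H.Walk x y)
    (hM : ∀ v ∈ q.support, ∀ s, near v s → hopDist L v y ≤ M) {x' : V}
    (hx' : F.Reachable x' x) : hopDist L x' y ≤ N + M := by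
  induction q generalizing x' with
  | nil => exact (hFN _ _ hx').trans le_self_add
  | @cons x v y h p ih =>
    by_cases hx : ∃ s, near x s
    · obtain ⟨s, hs⟩ := hx
      exact (hopDist_triangle L x' x y).trans
        (add_le_add (hFN _ _ hx') (hM x (Walk.cons h p).start_mem_support s hs))
    · push Not at hx
      exact ih (fun v hv => hM v (by simp [hv])) (hx'.trans (hF x v h hx).reachable)

lemma hopDist_le_of_near_start [DecidableEq V] (hHL : H ≤ L)
    (hA : ∀ v s, near v s → hopDist L v s ≤ A)
    {T : Finset V} {s₀ : V} {B : ℝ≥0∞}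
    (ih : ∀ a b (p : H.Walk a b), (∀ v ∈ p.support, ∀ s, near v s → s ∈ T.erase s₀) →
      hopDist L a b ≤ B)
    {x y : V} (q : H.Walk x y) (hq : ∀ v ∈ q.support, ∀ s, near v s → s ∈ T)
    (hx : near x s₀) : hopDist L x y ≤ 2 * A + 1 + B := by
  -- `z` is the last vertex of `q` near `s₀`, so the rest of `q` only meets centers other than `s₀`
  obtain ⟨z, hz, p, hsub, hlast⟩ :=
    q.exists_suffix_forall_not_mem_tail (P := (near · s₀)) ⟨x, q.start_mem_support, hx⟩
  have hxz : hopDist L x z ≤ 2 * A :=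
    calc hopDist L x z ≤ hopDist L x s₀ + hopDist L s₀ z := hopDist_triangle L x s₀ z
      _ ≤ A + A := add_le_add (hA _ _ hx) (hopDist_comm L s₀ z ▸ hA _ _ hz)
      _ = 2 * A := (two_mul A).symm
  cases p with
  | nil => exact hxz.trans (le_self_add.trans le_self_add)
  | @cons _ z' _ h p =>
    have hp : hopDist L z' y ≤ B := ih _ _ p fun v hv s hs =>
      Finset.mem_erase.2 ⟨fun hs₀ => hlast v (by simpa using hv) (hs₀ ▸ hs),
        hq v (hsub (by simp [hv])) s hs⟩
    calc hopDist L x y ≤ hopDist L x z + (hopDist L z z' + hopDist L z' y) :=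
          (hopDist_triangle L x z y).trans (add_le_add le_rfl (hopDist_triangle L z z' y))
      _ ≤ 2 * A + (1 + B) := add_le_add hxz (add_le_add (hopDist_le_one_of_adj (hHL h)) hp)
      _ = 2 * A + 1 + B := (add_assoc _ _ _).symm

theorem hopDist_le_of_walk_near_centers [DecidableEq V] (hHL : H ≤ L)
    (hF : ∀ u v, H.Adj u v → (∀ s, ¬ near u s) → F.Adj u v)
    (hFN : ∀ x y, F.Reachable x y → hopDist L x y ≤ N)
    (hA : ∀ v s, near v s → hopDist L v s ≤ A) (T : Finset V) {x y : V} (q : H.Walk x y)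
    (hq : ∀ v ∈ q.support, ∀ s, near v s → s ∈ T) :
    hopDist L x y ≤ N + T.card * (N + 2 * A + 1) := by
  induction T using Finset.strongInduction generalizing x y with
  | H T ih =>
  refine hopDist_le_of_far_prefix hF hFN q (fun v hv s hs => ?_) (Reachable.refl x)
  have hsT : s ∈ T := hq v hv s hs
  calc hopDist L v y ≤ 2 * A + 1 + (N + (T.erase s).card * (N + 2 * A + 1)) :=
        hopDist_le_of_near_start hHL hA (fun a b p hp => ih _ (Finset.erase_ssubset hsT) p hp)
          (q.dropUntil v hv) (fun v' hv' => hq v' (q.support_dropUntil_subset_support hv hv')) hs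
    _ = T.card * (N + 2 * A + 1) := by
        rw [← Finset.card_erase_add_one hsT]; push_cast; ring

end Centers

section WeightedDistance

variable {V : Type} {G G' : SimpleGraph V} {w : Sym2 V → ℝ} {x y z : V}

lemma walkLen_cons (w : Sym2 V → ℝ) (h : G.Adj x y) (p : G.Walk y z) :
    walkLen w (Walk.cons h p) = w s(x, y) + walkLen w p := by
  simp [walkLen]

lemma walkLen_append (w : Sym2 V → ℝ) (p : G.Walk x y) (q : G.Walk y z) :
    walkLen w (p.append q) = walkLen w p + walkLen w q := by
  simp [walkLen]

lemma walkLen_nonneg (hpos : ∀ e ∈ G.edgeSet, 0 < w e) (q : G.Walk x y) : 0 ≤ walkLen w q :=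
  List.sum_nonneg <| by simpa using fun e he => (hpos e (q.edges_subset_edgeSet he)).le

lemma walkLen_takeUntil_le [DecidableEq V] (hpos : ∀ e ∈ G.edgeSet, 0 < w e) (q : G.Walk x y)
    (hz : z ∈ q.support) : walkLen w (q.takeUntil z hz) ≤ walkLen w q := by
  conv_rhs => rw [← q.take_spec hz, walkLen_append]
  linarith [walkLen_nonneg hpos (q.dropUntil z hz)]

lemma wDist_le_walkLen (w : Sym2 V → ℝ) (q : G.Walk x y) (hq : q.IsPath) :
    wDist G w x y ≤ ENNReal.ofReal (walkLen w q) :=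
  iInf_le_of_le ⟨q, hq⟩ le_rfl

lemma wDist_le_walkLen_of_edges (w : Sym2 V → ℝ) (q : G.Walk x y) (hq : q.IsPath)
    (h : ∀ e ∈ q.edges, e ∈ G'.edgeSet) : wDist G' w x y ≤ ENNReal.ofReal (walkLen w q) :=
  iInf_le_of_le ⟨q.transfer G' h, hq.transfer h⟩ (by simp [walkLen, Walk.edges_transfer])

lemma wDist_anti (hG : G ≤ G') (w : Sym2 V → ℝ) (x y : V) : wDist G' w x y ≤ wDist G w x y :=
  le_iInf fun q => wDist_le_walkLen_of_edges w q.1 q.2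
    fun _ he => edgeSet_mono hG (q.1.edges_subset_edgeSet he)

lemma wDist_le_walkLen_of_pos (hpos : ∀ e ∈ G.edgeSet, 0 < w e) (q : G.Walk x y) :
    wDist G w x y ≤ ENNReal.ofReal (walkLen w q) := by
  classical
  refine (wDist_le_walkLen w q.bypass q.bypass_isPath).trans (ENNReal.ofReal_le_ofReal ?_)
  exact List.sum_map_le_of_nodup_of_subset w q.bypass_isPath.edges_nodup q.edges_bypass_subset_edges
    fun e he => (hpos e (q.edges_subset_edgeSet he)).le

lemma wDist_self (w : Sym2 V → ℝ) (x : V) : wDist G w x x = 0 :=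
  le_antisymm (by simpa [walkLen] using wDist_le_walkLen w (Walk.nil : G.Walk x x) .nil)
    zero_le

lemma wDist_le_of_adj (w : Sym2 V → ℝ) (h : G.Adj x y) :
    wDist G w x y ≤ ENNReal.ofReal (w s(x, y)) := by
  simpa [walkLen] using wDist_le_walkLen w (Path.singleton h).1 (Path.singleton h).2

lemma wDist_triangle (hpos : ∀ e ∈ G.edgeSet, 0 < w e) (x y z : V) :
    wDist G w x z ≤ wDist G w x y + wDist G w y z := by
  conv_rhs => rw [wDist, wDist, ENNReal.iInf_add]; enter [1, p]; rw [ENNReal.add_iInf]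
  refine le_iInf₂ fun p q => (wDist_le_walkLen_of_pos hpos (p.1.append q.1)).trans ?_
  rw [walkLen_append]
  exact ENNReal.ofReal_add_le

lemma exists_path_of_wDist_le [Finite V] {D : ℝ} (hD : 0 ≤ D)
    (h : wDist G w x y ≤ ENNReal.ofReal D) : ∃ q : G.Walk x y, q.IsPath ∧ walkLen w q ≤ D := by
  classical
  have : Fintype V := Fintype.ofFinite V
  cases isEmpty_or_nonempty {q : G.Walk x y // q.IsPath} with
  | inl hempty =>
    rw [wDist, iInf_of_empty] at h
    exact absurd h (by simp)
  | inr hne =>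
    obtain ⟨q, hq⟩ := Finite.exists_min fun q : {q : G.Walk x y // q.IsPath} =>
      ENNReal.ofReal (walkLen w q.1)
    exact ⟨q.1, q.2, (ENNReal.ofReal_le_ofReal_iff hD).1 ((le_iInf hq).trans h)⟩

end WeightedDistance

section PowerGraph

variable {V : Type} {G G' : SimpleGraph V} {w : Sym2 V → ℝ} {ℓ : ℝ} {x y : V}

lemma powerGraph_mono (hG : G ≤ G') (w : Sym2 V → ℝ) (ℓ : ℝ) :
    powerGraph G w ℓ ≤ powerGraph G' w ℓ :=
  fun x y h => ⟨h.1, (wDist_anti hG w x y).trans h.2⟩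

lemma hopDist_powerGraph_le_one (h : wDist G w x y ≤ ENNReal.ofReal ℓ) :
    hopDist (powerGraph G w ℓ) x y ≤ 1 := by
  rcases eq_or_ne x y with rfl | hne
  · simp [hopDist_self]
  · exact hopDist_le_one_of_adj ⟨hne, h⟩

/-- Greedy covering of a walk by jumps of weighted length at most `ℓ`: `a` is the weighted
distance already travelled since the last jump, and two consecutive jumps cover more than `ℓ`. -/
lemma hopDist_powerGraph_le_of_walkLen (hℓ : 0 < ℓ) (hpos : ∀ e ∈ G.edgeSet, 0 < w e)
    (hb : ∀ e ∈ G.edgeSet, w e ≤ ℓ) {v : V} (q : G.Walk v y) (x : V) (a : ℝ) (n : ℕ)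
    (ha : 0 ≤ a) (haℓ : a ≤ ℓ) (hxv : wDist G w x v ≤ ENNReal.ofReal a)
    (hlen : a + walkLen w q ≤ (n + 1) * ℓ) :
    hopDist (powerGraph G w ℓ) x y ≤ 2 * n + 1 := by
  induction q generalizing x a n with
  | nil =>
    exact (hopDist_powerGraph_le_one (hxv.trans (ENNReal.ofReal_le_ofReal haℓ))).trans
      le_add_self
  | @cons u v y h p ih =>
    have he : 0 < w s(u, v) := hpos _ h
    have heℓ : w s(u, v) ≤ ℓ := hb _ h
    have hp : 0 ≤ walkLen w p := walkLen_nonneg hpos p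
    rw [walkLen_cons] at hlen
    by_cases hjump : a + w s(u, v) ≤ ℓ
    · refine ih x _ n (by linarith) hjump ?_ (by linarith)
      calc wDist G w x v ≤ wDist G w x u + wDist G w u v := wDist_triangle hpos x u v
        _ ≤ ENNReal.ofReal a + ENNReal.ofReal (w s(u, v)) := add_le_add hxv (wDist_le_of_adj w h)
        _ = ENNReal.ofReal (a + w s(u, v)) := (ENNReal.ofReal_add ha he.le).symm
    · obtain ⟨n, rfl⟩ : ∃ n', n = n' + 1 :=
        Nat.exists_eq_succ_of_ne_zero (by rintro rfl; push_cast at hlen; linarith)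
      have hvy : hopDist (powerGraph G w ℓ) v y ≤ 2 * n + 1 :=
        ih v 0 n le_rfl hℓ.le (by simp [wDist_self]) (by push_cast at hlen; linarith)
      calc hopDist (powerGraph G w ℓ) x y
          ≤ hopDist (powerGraph G w ℓ) x u +
              (hopDist (powerGraph G w ℓ) u v + hopDist (powerGraph G w ℓ) v y) :=
            (hopDist_triangle _ x u y).trans (add_le_add le_rfl (hopDist_triangle _ u v y))
        _ ≤ 1 + (1 + (2 * n + 1)) :=
            add_le_add (hopDist_powerGraph_le_one (hxv.trans (ENNReal.ofReal_le_ofReal haℓ)))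
              (add_le_add (hopDist_powerGraph_le_one
                ((wDist_le_of_adj w h).trans (ENNReal.ofReal_le_ofReal heℓ))) hvy)
        _ = 2 * ↑(n + 1) + 1 := by push_cast; ring

lemma hopDist_powerGraph_le [Finite V] (hℓ : 0 < ℓ) (hpos : ∀ e ∈ G.edgeSet, 0 < w e)
    (hb : ∀ e ∈ G.edgeSet, w e ≤ ℓ) {n : ℕ} (h : wDist G w x y ≤ ENNReal.ofReal ((n + 1) * ℓ)) :
    hopDist (powerGraph G w ℓ) x y ≤ 2 * n + 1 := by
  obtain ⟨q, -, hq⟩ := exists_path_of_wDist_le (by positivity) h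
  exact hopDist_powerGraph_le_of_walkLen hℓ hpos hb q x 0 n le_rfl hℓ.le (by simp [wDist_self])
    (by linarith)

end PowerGraph

section Deletion

variable {V : Type} {G : SimpleGraph V} {w : Sym2 V → ℝ} {ℓ r : ℝ} {S Z : Set V} {x y u v : V}

lemma exists_wDist_le_of_mem_nbhd (h : v ∈ nbhd G w r S) :
    ∃ s ∈ S, wDist G w v s ≤ ENNReal.ofReal r := by
  obtain ⟨s, hs, q, hq, hlen⟩ := h
  exact ⟨s, hs, (wDist_le_walkLen w q hq).trans (ENNReal.ofReal_le_ofReal hlen)⟩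

lemma delVerts_le (G : SimpleGraph V) (Z : Set V) : delVerts G Z ≤ G := fun _ _ h => h.1

lemma wDist_delVerts_le (w : Sym2 V → ℝ) (q : G.Walk x y) (hq : q.IsPath)
    (hZ : ∀ z ∈ q.support, z ∉ Z) : wDist (delVerts G Z) w x y ≤ ENNReal.ofReal (walkLen w q) :=
  wDist_le_walkLen_of_edges w q hq fun e he => by
    induction e with
    | _ a b => exact ⟨q.adj_of_mem_edges he, hZ a (q.fst_mem_support_of_mem_edges he),
        hZ b (q.snd_mem_support_of_mem_edges he)⟩

/-- The path of length at most `ℓ` realising the edge stays within `ℓ` of `u`, so it cannot meet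
`Z ⊆ N^{≤r}[S]`. -/
lemma powerGraph_delVerts_adj_of_far [Finite V] (hℓ : 0 ≤ ℓ) (hr : 0 ≤ r)
    (hpos : ∀ e ∈ G.edgeSet, 0 < w e) (hZ : Z ⊆ nbhd G w r S)
    (hu : ∀ s ∈ S, ¬ wDist G w u s ≤ ENNReal.ofReal (ℓ + r)) (h : (powerGraph G w ℓ).Adj u v) :
    (powerGraph (delVerts G Z) w ℓ).Adj u v ∧ u ∉ Z ∧ v ∉ Z := by
  classical
  obtain ⟨hne, hd⟩ := h
  obtain ⟨q, hq, hlen⟩ := exists_path_of_wDist_le hℓ hd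
  have hfar : ∀ z ∈ q.support, z ∉ Z := by
    intro z hz hzZ
    obtain ⟨s, hs, hzs⟩ := exists_wDist_le_of_mem_nbhd (hZ hzZ)
    refine hu s hs ?_
    calc wDist G w u s ≤ wDist G w u z + wDist G w z s := wDist_triangle hpos u z s
      _ ≤ ENNReal.ofReal ℓ + ENNReal.ofReal r :=
          add_le_add ((wDist_le_walkLen w _ (hq.takeUntil hz)).trans
            (ENNReal.ofReal_le_ofReal ((walkLen_takeUntil_le hpos q hz).trans hlen))) hzs
      _ = ENNReal.ofReal (ℓ + r) := (ENNReal.ofReal_add hℓ hr).symm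
  exact ⟨⟨hne, (wDist_delVerts_le w q hq hfar).trans (ENNReal.ofReal_le_ofReal hlen)⟩,
    hfar u q.start_mem_support, hfar v q.end_mem_support⟩

variable {m : ℕ} {c c' : V → Fin m}

lemma colorGraph_le (K : SimpleGraph V) (A : Set V) (c : V → Fin m) : colorGraph K A c ≤ K :=
  fun _ _ h => h.1

lemma mem_of_colorGraph_reachable {K : SimpleGraph V} {A : Set V}
    (h : (colorGraph K A c).Reachable x y) (hne : x ≠ y) : x ∈ A := by
  obtain ⟨p⟩ := h
  cases p with
  | nil => exact absurd rfl hne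
  | cons h _ => exact h.2.1

lemma HasWeakDiamLE.hopDist_le {K L : SimpleGraph V} {A : Set V} {N : ℝ}
    (hc : HasWeakDiamLE K A L c N) (h : (colorGraph K A c).Reachable x y) :
    hopDist L x y ≤ ENNReal.ofReal N := by
  rcases eq_or_ne x y with rfl | hne
  · simp [hopDist_self]
  · exact hc x (mem_of_colorGraph_reachable h hne) y
      (mem_of_colorGraph_reachable h.symm hne.symm) h

lemma colorGraph_delVerts_adj_of_far [Finite V] (hℓ : 0 ≤ ℓ) (hr : 0 ≤ r)
    (hpos : ∀ e ∈ G.edgeSet, 0 < w e) (hZ : Z ⊆ nbhd G w r S) (hc : ∀ v ∈ Zᶜ, c' v = c v)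
    (hu : ∀ s ∈ S, ¬ wDist G w u s ≤ ENNReal.ofReal (ℓ + r))
    (h : (colorGraph (powerGraph G w ℓ) Set.univ c').Adj u v) :
    (colorGraph (powerGraph (delVerts G Z) w ℓ) Zᶜ c).Adj u v := by
  obtain ⟨hadj, huZ, hvZ⟩ := powerGraph_delVerts_adj_of_far hℓ hr hpos hZ hu h.1
  exact ⟨hadj, huZ, hvZ, by rw [← hc u huZ, ← hc v hvZ]; exact h.2.2.2⟩

theorem hopDist_le_of_colorGraph_walk [Finite V] {N : ℝ} {n : ℕ} (hℓ : 0 < ℓ) (hr : 0 ≤ r)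
    (hn : ℓ + r ≤ (n + 1) * ℓ) (hpos : ∀ e ∈ G.edgeSet, 0 < w e)
    (hb : ∀ e ∈ G.edgeSet, w e ≤ ℓ) (hZ : Z ⊆ nbhd G w r S) (hc : ∀ v ∈ Zᶜ, c' v = c v)
    (hcN : HasWeakDiamLE (powerGraph (delVerts G Z) w ℓ) Zᶜ (powerGraph (delVerts G Z) w ℓ) c N)
    (q : (colorGraph (powerGraph G w ℓ) Set.univ c').Walk x y) :
    hopDist (powerGraph G w ℓ) x y ≤
      ENNReal.ofReal N + S.ncard * (ENNReal.ofReal N + 2 * (2 * n + 1) + 1) := by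
  classical
  rw [Set.ncard_eq_toFinset_card S S.toFinite]
  exact hopDist_le_of_walk_near_centers
    (near := fun v s => s ∈ S ∧ wDist G w v s ≤ ENNReal.ofReal (ℓ + r)) (colorGraph_le _ _ _)
    (fun u v h hu => colorGraph_delVerts_adj_of_far hℓ.le hr hpos hZ hc
      (fun s hs h => hu s ⟨hs, h⟩) h)
    (fun x y h => (hopDist_anti (powerGraph_mono (delVerts_le _ _) _ _) x y).trans
      (hcN.hopDist_le h))
    (fun v s h => hopDist_powerGraph_le hℓ hpos hb (h.2.trans (ENNReal.ofReal_le_ofReal hn)))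
    S.toFinite.toFinset q (fun v _ s h => S.toFinite.mem_toFinset.2 h.1)

end Deletion

/-- Theorem (Lemma `deleting_centered_set`): colourings of `(G,φ)^ℓ` obtained by combining a
colouring of `((G,φ)−Z)^ℓ` of weak diameter in `((G,φ)−Z)^ℓ` at most `N` with an arbitrary
colouring of `Z`, where `Z ⊆ N_{(G,φ)}^{≤r}[S]` with `|S| ≤ k`, have weak diameter in
`(G,φ)^ℓ` at most `N*`. -/
theorem deleting_centered_set (k : ℕ) (r : ℝ) (hr : 0 ≤ r) (ℓ N : ℝ)
    (hℓ : 0 < ℓ) (hN : 0 < N) :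
    ∃ Nstar : ℝ, (k + 1 : ℝ) * N ≤ Nstar ∧
      ∀ W : WGraph, W.IsBounded ℓ →
        ∀ S : Set W.V, S.ncard ≤ k →
          ∀ Z : Set W.V, Z ⊆ nbhd W.G W.w r S →
            ∀ m : ℕ, 0 < m → ∀ c cZ : W.V → Fin m,
              HasWeakDiamLE (powerGraph (delVerts W.G Z) W.w ℓ) Zᶜ
                (powerGraph (delVerts W.G Z) W.w ℓ) c N →
              ∀ c' : W.V → Fin m,
                (∀ v ∈ Z, c' v = cZ v) →
                (∀ v ∈ Zᶜ, c' v = c v) →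
                HasWeakDiamLE (powerGraph W.G W.w ℓ) Set.univ
                  (powerGraph W.G W.w ℓ) c' Nstar := by
  obtain ⟨n, hn⟩ : ∃ n : ℕ, ℓ + r ≤ (n + 1) * ℓ := by
    obtain ⟨n, hn⟩ := exists_nat_ge (r / ℓ)
    exact ⟨n, by rw [div_le_iff₀ hℓ] at hn; linarith⟩
  refine ⟨N + k * (N + 2 * (2 * n + 1) + 1), by nlinarith, ?_⟩
  intro W hb S hSk Z hZ m _ c cZ hcN c' _ hc' x _ y _ ⟨q⟩
  have := W.fin
  refine (hopDist_le_of_colorGraph_walk hℓ hr hn W.pos hb hZ hc' hcN q).trans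
    ((add_le_add_right (mul_le_mul_left (Nat.cast_le.2 hSk) _) _).trans_eq ?_)
  rw [ENNReal.ofReal_add hN.le (by positivity), ENNReal.ofReal_mul (by positivity),
    ENNReal.ofReal_add (by positivity) (by positivity),
    ENNReal.ofReal_add hN.le (by positivity)]
  simp [ENNReal.ofReal_mul, ENNReal.ofReal_add]
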